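/- Let m, n, r be positive integers with 0 < m < n and gcd(m, n) = 1. If p is a prime greater than (nr)^{1/2} which divides D_{m,n,r}, then p² does not divide D_{m,n,r}, and there exist an integer l with 1 ≤ l < n/2, gcd(l, n) = 1 and l·p ≡ −m (mod n), and a non-negative integer A, such that (nr + m + n)/(nA + n − l) ≤ p ≤ (nr − m)/(nA + l). Moreover, every prime p greater than (nr + m)^{1/2} for which such l and A exist is a divisor of D_{m,n,r}. -/

import Mathlib

open Polynomial in
/-- The hypergeometric polynomial
`Y_{m,n,r}(z) = ₂F₁(−r, −r−m/n; 1−m/n; z)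
  = ∑_{h=0}^{r} C(r,h) · (∏_{i=r−h+1}^{r} (in+m))/(∏_{i=1}^{h} (in−m)) · z^h`. -/
noncomputable def hyperY (m n r : ℕ) : Polynomial ℚ :=
  ∑ h ∈ Finset.range (r + 1),
    C ((r.choose h : ℚ) *
        (∏ i ∈ Finset.Icc (r - h + 1) r, ((i : ℚ) * n + m)) /
        (∏ i ∈ Finset.Icc 1 h, ((i : ℚ) * n - m))) * X ^ h

open Polynomial in
/-- The hypergeometric polynomial
`X_{m,n,r}(z) = z^r·₂F₁(−r, −r−m/n; 1−m/n; 1/z)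
  = ∑_{h=0}^{r} C(r,h) · (∏_{i=r−h+1}^{r} (in+m))/(∏_{i=1}^{h} (in−m)) · z^{r−h}`. -/
noncomputable def hyperX (m n r : ℕ) : Polynomial ℚ :=
  ∑ h ∈ Finset.range (r + 1),
    C ((r.choose h : ℚ) *
        (∏ i ∈ Finset.Icc (r - h + 1) r, ((i : ℚ) * n + m)) /
        (∏ i ∈ Finset.Icc 1 h, ((i : ℚ) * n - m))) * X ^ (r - h)

/-- `D_{m,n,r}`: the smallest positive integer `D` such that `D·Y_{m,n,r}`
has integer coefficients. -/
noncomputable def hyperD (m n r : ℕ) : ℕ :=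
  sInf {D : ℕ | 0 < D ∧ ∀ h : ℕ, ((D : ℚ) * (hyperY m n r).coeff h).den = 1}

/-!
For a prime `p` with `p² > nr`, the `h`-th coefficient of `Y_{m,n,r}` is
`C(r,h) · ∏_{r-h<i≤r} (in+m) / ∏_{0<i≤h} (in-m)`, and `r` and all factors `in - m` are below `p²`.
If `p ∣ n`, no factor `in - m` is divisible by `p`. Otherwise let `nα ≡ m (mod p)`, `1 ≤ α ≤ p`;
then the `p`-adic valuation of the coefficient is at least (and, once `p² > nr + m`, equal to)
the carry of `h + (r - h)` in base `p` (Kummer), plus the number of `i ∈ (r-h, r]` with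
`p ∣ i + α`, minus the number of `i ∈ (0, h]` with `p ∣ i + (p - α)`. Comparing base-`p` digits,
this count is at least `-1`; it equals `-1` only if `α ≤ r mod p < p - α`, and then it does so
at `h = α`. As `D_{m,n,r}` is the lcm of the denominators of the coefficients, `p ∥ D_{m,n,r}`
exactly in that case, and with `A = ⌊r/p⌋`, `lp = nα - m` the condition `α ≤ r mod p < p - α`
is the pair of inequalities bounding `p`.
-/

open Finset Polynomial

theorem Nat.add_div_of_le {p a : ℕ} (x : ℕ) (hp : 0 < p) (ha : a ≤ p) :
    (x + a) / p = x / p + if p ≤ x % p + a then 1 else 0 := by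
  rcases ha.lt_or_eq with ha | rfl
  · rw [Nat.add_div hp, Nat.div_eq_of_lt ha, Nat.mod_eq_of_lt ha, add_zero]
  · rw [Nat.add_div_right x hp, if_pos (Nat.le_add_left a _)]

theorem Nat.card_filter_Ioc_dvd_add (p a : ℕ) {x y : ℕ} (hxy : x ≤ y) :
    #{i ∈ Ioc x y | p ∣ i + a} = (y + a) / p - (x + a) / p := by
  have hshift : #{i ∈ Ioc x y | p ∣ i + a} = #{j ∈ Ioc (x + a) (y + a) | p ∣ j} := by
    rw [← map_add_right_Ioc, filter_map, card_map]
    rfl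
  have hsplit : {j ∈ Ioc (x + a) (y + a) | p ∣ j} =
      {j ∈ Ioc 0 (y + a) | p ∣ j} \ {j ∈ Ioc 0 (x + a) | p ∣ j} := by
    ext j
    by_cases hj : p ∣ j <;> simp [hj]
    omega
  rw [hshift, hsplit,
    card_sdiff_of_subset (monotone_filter_left _ (Ioc_subset_Ioc_right (by omega))),
    Nat.Ioc_filter_dvd_card_eq_div, Nat.Ioc_filter_dvd_card_eq_div]

section
variable {p : ℕ} [hp : Fact p.Prime]

theorem padicValNat_finset_prod {ι : Type*} {s : Finset ι} {f : ι → ℕ}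
    (hf : ∀ i ∈ s, f i ≠ 0) :
    padicValNat p (∏ i ∈ s, f i) = ∑ i ∈ s, padicValNat p (f i) := by
  simp_rw [← Nat.factorization_def _ hp.out]
  rw [Nat.factorization_prod hf, Finsupp.finsetSum_apply]

theorem card_filter_dvd_le_padicValNat_prod {ι : Type*} {s : Finset ι} {f : ι → ℕ}
    (hf : ∀ i ∈ s, f i ≠ 0) :
    #{i ∈ s | p ∣ f i} ≤ padicValNat p (∏ i ∈ s, f i) := by
  rw [padicValNat_finset_prod hf, card_filter]
  refine sum_le_sum fun i hi => ?_
  split_ifs with hdvd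
  exacts [one_le_padicValNat_of_dvd (hf i hi) hdvd, Nat.zero_le _]

theorem padicValNat_prod_eq_card_filter_dvd {ι : Type*} {s : Finset ι} {f : ι → ℕ}
    (hf : ∀ i ∈ s, 0 < f i ∧ f i < p ^ 2) :
    padicValNat p (∏ i ∈ s, f i) = #{i ∈ s | p ∣ f i} := by
  rw [padicValNat_finset_prod fun i hi => (hf i hi).1.ne', card_filter]
  refine sum_congr rfl fun i hi => ?_
  obtain ⟨hpos, hlt⟩ := hf i hi
  have hval : padicValNat p (f i) < 2 := by
    by_contra! h2
    exact (Nat.le_of_dvd hpos ((padicValNat_dvd_iff_le hpos.ne').mpr h2)).not_gt hlt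
  split_ifs with hdvd
  · have := one_le_padicValNat_of_dvd hpos.ne' hdvd
    omega
  · exact padicValNat.eq_zero_of_not_dvd hdvd

theorem padicValNat_choose_of_lt_sq {n k : ℕ} (hkn : k ≤ n) (hn : n < p ^ 2) :
    padicValNat p (n.choose k) = if p ≤ k % p + (n - k) % p then 1 else 0 := by
  rw [padicValNat_choose hkn (Nat.log_lt_of_lt_pow' two_ne_zero hn)]
  split_ifs <;> simp_all [filter_singleton]

theorem pow_dvd_den_iff_padicValRat_le {k : ℕ} (hk : k ≠ 0) (q : ℚ) :
    p ^ k ∣ q.den ↔ padicValRat p q ≤ -k := by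
  rw [padicValRat_def, padicValNat_dvd_iff_le q.den_ne_zero]
  by_cases hpd : p ∣ q.den
  · have hnum : ¬ p ∣ q.num.natAbs := fun hpn =>
      hp.out.one_lt.ne' (Nat.eq_one_of_dvd_coprimes q.reduced hpn hpd)
    rw [padicValInt, padicValNat.eq_zero_of_not_dvd hnum]
    omega
  · rw [padicValNat.eq_zero_of_not_dvd hpd]
    have : (0 : ℤ) ≤ padicValInt p q.num := Int.natCast_nonneg _
    omega

end

theorem Rat.den_dvd_iff_den_mul_eq_one (q : ℚ) (D : ℕ) :
    q.den ∣ D ↔ ((D : ℚ) * q).den = 1 := by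
  have hq : (D : ℚ) * q = ((D * q.num : ℤ) : ℚ) / ((q.den : ℤ) : ℚ) := by
    push_cast
    rw [mul_div_assoc, Rat.num_div_den]
  have hcop : IsCoprime (q.den : ℤ) q.num := by
    rw [Int.isCoprime_iff_gcd_eq_one, Int.gcd_comm]
    exact q.reduced
  rw [hq, Rat.den_div_intCast_eq_one_iff _ _ (by exact_mod_cast q.den_ne_zero),
    ← Int.natCast_dvd_natCast]
  exact ⟨fun h => h.mul_right _, hcop.dvd_of_dvd_mul_right⟩

namespace Polynomial

theorem sInf_setOf_den_mul_coeff_eq_one (P : ℚ[X]) :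
    sInf {D : ℕ | 0 < D ∧ ∀ h, ((D : ℚ) * P.coeff h).den = 1} =
      P.support.lcm fun h => (P.coeff h).den := by
  set L := P.support.lcm fun h => (P.coeff h).den
  have hL : 0 < L := Nat.pos_of_ne_zero (lcm_ne_zero_iff.mpr fun h _ => (P.coeff h).den_ne_zero)
  have hset : {D : ℕ | 0 < D ∧ ∀ h, ((D : ℚ) * P.coeff h).den = 1} = {D | 0 < D ∧ L ∣ D} := by
    ext D
    simp only [Set.mem_ofPred_eq, ← Rat.den_dvd_iff_den_mul_eq_one, L, Finset.lcm_dvd_iff]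
    refine and_congr_right fun _ => ⟨fun h i _ => h i, fun h i => ?_⟩
    by_cases hi : i ∈ P.support
    · exact h i hi
    · simp [notMem_support_iff.mp hi]
  rw [hset]
  exact le_antisymm (Nat.sInf_le ⟨hL, dvd_rfl⟩)
    (le_csInf ⟨L, hL, dvd_rfl⟩ fun D hD => Nat.le_of_dvd hD.1 hD.2)

theorem pow_dvd_lcm_den_coeff_iff {P : ℚ[X]} {p k : ℕ} (hp : p.Prime) (hk : k ≠ 0) :
    p ^ k ∣ (P.support.lcm fun h => (P.coeff h).den) ↔ ∃ h, p ^ k ∣ (P.coeff h).den := by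
  simp_rw [hp.pow_dvd_iff_le_factorization (lcm_ne_zero_iff.mpr fun h _ => (P.coeff h).den_ne_zero),
    factorization_lcm (fun h _ => (P.coeff h).den_ne_zero),
    Finset.le_sup_iff (Nat.pos_of_ne_zero hk),
    hp.pow_dvd_iff_le_factorization (P.coeff _).den_ne_zero]
  refine ⟨fun ⟨h, _, hh⟩ => ⟨h, hh⟩, fun ⟨h, hh⟩ => ⟨h, mem_support_iff.mpr fun h0 => ?_, hh⟩⟩
  simp [h0] at hh
  omega

end Polynomial

theorem exists_mul_modEq_of_not_dvd {n p : ℕ} [hp : Fact p.Prime] (hpn : ¬ p ∣ n) (m : ℕ) :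
    ∃ α, 1 ≤ α ∧ α ≤ p ∧ n * α ≡ m [MOD p] := by
  have hn : (n : ZMod p) ≠ 0 := by rwa [Ne, ZMod.natCast_eq_zero_iff]
  have : NeZero p := ⟨hp.out.ne_zero⟩
  have hs := ZMod.val_lt (-(m : ZMod p) / (n : ZMod p))
  refine ⟨p - (-(m : ZMod p) / (n : ZMod p)).val, by omega, Nat.sub_le _ _, ?_⟩
  rw [← ZMod.natCast_eq_natCast_iff, Nat.cast_mul, Nat.cast_sub hs.le, ZMod.natCast_self,
    ZMod.natCast_val, ZMod.cast_id', id]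
  field_simp
  ring

section
variable {m n p α : ℕ} [hp : Fact p.Prime]

theorem dvd_mul_sub_iff_dvd_add (hpn : ¬ p ∣ n) (hα : n * α ≡ m [MOD p]) (hαp : α ≤ p) {i : ℕ}
    (hmi : m ≤ i * n) : p ∣ i * n - m ↔ p ∣ i + (p - α) := by
  have hn : (n : ZMod p) ≠ 0 := by rwa [Ne, ZMod.natCast_eq_zero_iff]
  rw [← ZMod.natCast_eq_zero_iff, ← ZMod.natCast_eq_zero_iff, Nat.cast_sub hmi, Nat.cast_add,
    Nat.cast_sub hαp, ZMod.natCast_self, ← (ZMod.natCast_eq_natCast_iff _ _ _).mpr hα]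
  push_cast
  rw [show (i : ZMod p) * n - n * α = n * (i + (0 - α)) by ring, mul_eq_zero, or_iff_right hn]

theorem dvd_mul_add_iff_dvd_add (hpn : ¬ p ∣ n) (hα : n * α ≡ m [MOD p]) {i : ℕ} :
    p ∣ i * n + m ↔ p ∣ i + α := by
  have hn : (n : ZMod p) ≠ 0 := by rwa [Ne, ZMod.natCast_eq_zero_iff]
  rw [← ZMod.natCast_eq_zero_iff, ← ZMod.natCast_eq_zero_iff, Nat.cast_add,
    ← (ZMod.natCast_eq_natCast_iff _ _ _).mpr hα]
  push_cast
  rw [show (i : ZMod p) * n + n * α = n * (i + α) by ring, mul_eq_zero, or_iff_right hn]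

end

def hyperNum (m n r h : ℕ) : ℕ := ∏ i ∈ Ioc (r - h) r, (i * n + m)

def hyperDen (m n h : ℕ) : ℕ := ∏ i ∈ Ioc 0 h, (i * n - m)

section
variable {m n r h : ℕ}

theorem hyperNum_pos (hn : 0 < n) : 0 < hyperNum m n r h :=
  prod_pos fun _ hi => Nat.add_pos_left (Nat.mul_pos (Nat.zero_lt_of_lt (mem_Ioc.mp hi).1) hn) m

theorem hyperDen_pos (hmn : m < n) : 0 < hyperDen m n h :=
  prod_pos fun _ hi =>
    Nat.sub_pos_of_lt (hmn.trans_le (Nat.le_mul_of_pos_left n (mem_Ioc.mp hi).1))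

theorem hyperY_coeff (hmn : m < n) (hhr : h ≤ r) :
    (hyperY m n r).coeff h = ((r.choose h * hyperNum m n r h : ℕ) : ℚ) / hyperDen m n h := by
  simp only [hyperY, finsetSum_coeff, coeff_C_mul, coeff_X_pow]
  rw [sum_eq_single_of_mem h (mem_range.mpr (by omega)) fun b _ hb => by simp [Ne.symm hb],
    if_pos rfl, mul_one, hyperNum, hyperDen, Icc_add_one_left_eq_Ioc, ← zero_add 1,
    Icc_add_one_left_eq_Ioc]
  push_cast
  congr 1
  refine prod_congr rfl fun i hi => ?_
  rw [Nat.cast_sub (hmn.le.trans (Nat.le_mul_of_pos_left n (mem_Ioc.mp hi).1)), Nat.cast_mul]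

theorem hyperY_coeff_of_lt (hrh : r < h) : (hyperY m n r).coeff h = 0 := by
  simp only [hyperY, finsetSum_coeff, coeff_C_mul, coeff_X_pow]
  exact sum_eq_zero fun i hi => by rw [if_neg (by simp at hi; omega), mul_zero]

theorem hyperD_eq_lcm :
    hyperD m n r = (hyperY m n r).support.lcm fun h => ((hyperY m n r).coeff h).den :=
  sInf_setOf_den_mul_coeff_eq_one _

variable {p : ℕ} [hp : Fact p.Prime]

theorem pow_dvd_hyperD_iff {k : ℕ} (hk : k ≠ 0) :
    p ^ k ∣ hyperD m n r ↔ ∃ h ≤ r, padicValRat p ((hyperY m n r).coeff h) ≤ -k := by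
  rw [hyperD_eq_lcm, pow_dvd_lcm_den_coeff_iff hp.out hk]
  simp_rw [pow_dvd_den_iff_padicValRat_le hk]
  refine ⟨fun ⟨h, hh⟩ => ⟨h, ?_, hh⟩, fun ⟨h, _, hh⟩ => ⟨h, hh⟩⟩
  by_contra! hrh
  rw [hyperY_coeff_of_lt hrh, padicValRat.zero] at hh
  omega

theorem padicValRat_hyperY_coeff (hmn : m < n) (hhr : h ≤ r) :
    padicValRat p ((hyperY m n r).coeff h) = padicValNat p (r.choose h) +
      padicValNat p (hyperNum m n r h) - padicValNat p (hyperDen m n h) := by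
  have hchoose := Nat.choose_pos hhr
  have hnum := hyperNum_pos (m := m) (r := r) (h := h) (Nat.zero_lt_of_lt hmn)
  have hden := hyperDen_pos (h := h) hmn
  rw [hyperY_coeff hmn hhr, padicValRat.div (by positivity) (by positivity), Nat.cast_mul,
    padicValRat.mul (by positivity) (by positivity), padicValRat.of_nat, padicValRat.of_nat,
    padicValRat.of_nat]

theorem padicValNat_hyperDen_eq_zero_of_dvd (hpn : p ∣ n) (hg : Nat.Coprime m n) (hmn : m < n) :
    padicValNat p (hyperDen m n h) = 0 := by
  refine padicValNat.eq_zero_of_not_dvd fun hdvd => ?_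
  obtain ⟨i, hi, hpi⟩ := (Prime.dvd_finsetProd_iff hp.out.prime _).mp hdvd
  have hmi : m ≤ i * n := hmn.le.trans (Nat.le_mul_of_pos_left n (mem_Ioc.mp hi).1)
  have hpm := Nat.dvd_sub (dvd_mul_of_dvd_right hpn i) hpi
  rw [Nat.sub_sub_self hmi] at hpm
  exact hp.out.one_lt.ne' (Nat.eq_one_of_dvd_coprimes hg hpm hpn)

theorem padicValRat_hyperY_coeff_nonneg_of_dvd (hpn : p ∣ n) (hg : Nat.Coprime m n)
    (hmn : m < n) (hhr : h ≤ r) : 0 ≤ padicValRat p ((hyperY m n r).coeff h) := by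
  rw [padicValRat_hyperY_coeff hmn hhr, padicValNat_hyperDen_eq_zero_of_dvd hpn hg hmn,
    Nat.cast_zero, sub_zero]
  positivity

variable {α : ℕ}

theorem padicValNat_hyperDen (hpn : ¬ p ∣ n) (hα : n * α ≡ m [MOD p]) (hα1 : 1 ≤ α)
    (hαp : α ≤ p) (hmn : m < n) (hh : n * h < p ^ 2) :
    padicValNat p (hyperDen m n h) = (h + (p - α)) / p := by
  have hmi : ∀ i ∈ Ioc 0 h, m < i * n := fun i hi =>
    hmn.trans_le (Nat.le_mul_of_pos_left n (mem_Ioc.mp hi).1)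
  have hin : ∀ i ∈ Ioc 0 h, i * n ≤ n * h := fun i hi => by
    rw [mul_comm]
    exact Nat.mul_le_mul_left n (mem_Ioc.mp hi).2
  rw [hyperDen, padicValNat_prod_eq_card_filter_dvd fun i hi =>
      ⟨Nat.sub_pos_of_lt (hmi i hi), by have := hin i hi; omega⟩,
    filter_congr fun i hi => dvd_mul_sub_iff_dvd_add hpn hα hαp (hmi i hi).le,
    Nat.card_filter_Ioc_dvd_add _ _ (Nat.zero_le h), zero_add,
    Nat.div_eq_of_lt (by omega : p - α < p), Nat.sub_zero]

theorem le_padicValNat_hyperNum (hpn : ¬ p ∣ n) (hα : n * α ≡ m [MOD p]) (hn : 0 < n) :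
    (r + α) / p - (r - h + α) / p ≤ padicValNat p (hyperNum m n r h) := by
  rw [← Nat.card_filter_Ioc_dvd_add _ _ (Nat.sub_le r h),
    ← filter_congr fun i _ => dvd_mul_add_iff_dvd_add hpn hα]
  exact card_filter_dvd_le_padicValNat_prod fun i hi =>
    (Nat.add_pos_left (Nat.mul_pos (Nat.zero_lt_of_lt (mem_Ioc.mp hi).1) hn) m).ne'

theorem padicValNat_hyperNum (hpn : ¬ p ∣ n) (hα : n * α ≡ m [MOD p]) (hn : 0 < n)
    (hr : n * r + m < p ^ 2) :
    padicValNat p (hyperNum m n r h) = (r + α) / p - (r - h + α) / p := by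
  have hin : ∀ i ∈ Ioc (r - h) r, i * n + m < p ^ 2 := fun i hi => by
    have := Nat.mul_le_mul_left n (mem_Ioc.mp hi).2
    rw [mul_comm] at this
    omega
  rw [hyperNum, padicValNat_prod_eq_card_filter_dvd fun i hi =>
      ⟨Nat.add_pos_left (Nat.mul_pos (Nat.zero_lt_of_lt (mem_Ioc.mp hi).1) hn) m, hin i hi⟩,
    filter_congr fun i _ => dvd_mul_add_iff_dvd_add hpn hα,
    Nat.card_filter_Ioc_dvd_add _ _ (Nat.sub_le r h)]

end

/-- Minus the `p`-adic valuation of the `h`-th coefficient of `Y_{m,n,r}` when `nα ≡ m (mod p)`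
and `p² > nr + m`: the factors of the denominator divisible by `p`, minus the carry of `C(r,h)`,
minus the factors of the numerator divisible by `p`. -/
def hyperExcess (p α r h : ℕ) : ℤ :=
  ((h + (p - α)) / p : ℕ) - (if p ≤ h % p + (r - h) % p then 1 else 0) -
    ((r + α) / p - (r - h + α) / p : ℕ)

section
variable {p α r h : ℕ}

theorem hyperExcess_eq (hp : 0 < p) (hαp : α ≤ p) (hhr : h ≤ r) :
    hyperExcess p α r h = (if α ≤ h % p then 1 else 0) + (if p ≤ (r - h) % p + α then 1 else 0)
      - (if p ≤ r % p + α then 1 else 0) - 2 * (if p ≤ h % p + (r - h) % p then 1 else 0) := by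
  have hdiv : r / p = h / p + (r - h) / p + if p ≤ h % p + (r - h) % p then 1 else 0 := by
    conv_lhs => rw [← Nat.add_sub_cancel' hhr]
    exact Nat.add_div hp
  rw [hyperExcess, Nat.add_div_of_le h hp (Nat.sub_le p α), Nat.add_div_of_le r hp hαp,
    Nat.add_div_of_le (r - h) hp hαp, hdiv,
    (Nat.add_sub_cancel' hhr ▸ Nat.add_mod_eq_ite : r % p = _)]
  have := Nat.mod_lt h hp
  have := Nat.mod_lt (r - h) hp
  generalize h / p = H, (r - h) / p = W, h % p = y, (r - h) % p = w at *
  split_ifs <;> omega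

theorem hyperExcess_le_one (hp : 0 < p) (hαp : α ≤ p) (hhr : h ≤ r) :
    hyperExcess p α r h ≤ 1 := by
  rw [hyperExcess_eq hp hαp hhr, (Nat.add_sub_cancel' hhr ▸ Nat.add_mod_eq_ite : r % p = _)]
  split_ifs <;> omega

theorem window_of_hyperExcess_eq_one (hp : 0 < p) (hαp : α ≤ p) (hhr : h ≤ r)
    (h1 : hyperExcess p α r h = 1) : α ≤ r % p ∧ r % p + α < p := by
  have hmod := (Nat.add_sub_cancel' hhr ▸ Nat.add_mod_eq_ite : r % p = _)
  rw [hyperExcess_eq hp hαp hhr, hmod] at h1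
  rw [hmod]
  split_ifs at h1 ⊢ <;> omega

theorem hyperExcess_self_eq_one (hwin : α ≤ r % p ∧ r % p + α < p) :
    hyperExcess p α r α = 1 := by
  have hp : 0 < p := by omega
  have hmod : (r - α) % p = r % p - α := by
    conv_lhs => rw [← Nat.div_add_mod r p, Nat.add_sub_assoc hwin.1, Nat.mul_add_mod]
    exact Nat.mod_eq_of_lt (by omega)
  rw [hyperExcess_eq hp (by omega) (hwin.1.trans (Nat.mod_le r p)), hmod,
    Nat.mod_eq_of_lt (by omega : α < p)]
  split_ifs <;> omega

end

section
variable {m n p α r h : ℕ} [hp : Fact p.Prime]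

theorem neg_hyperExcess_le_padicValRat (hpn : ¬ p ∣ n) (hα : n * α ≡ m [MOD p]) (hα1 : 1 ≤ α)
    (hαp : α ≤ p) (hmn : m < n) (hr : n * r < p ^ 2) (hhr : h ≤ r) :
    -hyperExcess p α r h ≤ padicValRat p ((hyperY m n r).coeff h) := by
  have hn : 0 < n := Nat.zero_lt_of_lt hmn
  have hnum := le_padicValNat_hyperNum (r := r) (h := h) hpn hα hn
  rw [padicValRat_hyperY_coeff hmn hhr,
    padicValNat_choose_of_lt_sq hhr ((Nat.le_mul_of_pos_left r hn).trans_lt hr),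
    padicValNat_hyperDen hpn hα hα1 hαp hmn ((Nat.mul_le_mul_left n hhr).trans_lt hr),
    hyperExcess]
  split_ifs <;> omega

theorem padicValRat_eq_neg_hyperExcess (hpn : ¬ p ∣ n) (hα : n * α ≡ m [MOD p]) (hα1 : 1 ≤ α)
    (hαp : α ≤ p) (hmn : m < n) (hr : n * r + m < p ^ 2) (hhr : h ≤ r) :
    padicValRat p ((hyperY m n r).coeff h) = -hyperExcess p α r h := by
  have hn : 0 < n := Nat.zero_lt_of_lt hmn
  rw [padicValRat_hyperY_coeff hmn hhr, padicValNat_choose_of_lt_sq hhr (by nlinarith),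
    padicValNat_hyperDen hpn hα hα1 hαp hmn (by nlinarith), padicValNat_hyperNum hpn hα hn hr,
    hyperExcess]
  split_ifs <;> omega

end

def IsLargePrimeWitness (m n r p l A : ℕ) : Prop :=
  1 ≤ l ∧ (l : ℝ) < (n : ℝ) / 2 ∧ Nat.gcd l n = 1 ∧ n ∣ (l * p + m) ∧
    ((n : ℝ) * r + m + n) / ((n : ℝ) * A + n - l) ≤ (p : ℝ) ∧
    (p : ℝ) ≤ ((n : ℝ) * r - m) / ((n : ℝ) * A + l)

section
variable {m n r p l A α : ℕ}

theorem witness_lower_bound_iff (hl : l < n) (hα : n * α = l * p + m) :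
    ((n : ℝ) * r + m + n) / ((n : ℝ) * A + n - l) ≤ p ↔ r + α + 1 ≤ A * p + p := by
  have hn : (0 : ℝ) < n := by exact_mod_cast Nat.zero_lt_of_lt hl
  have hl' : (l : ℝ) < n := by exact_mod_cast hl
  have hα' : (n : ℝ) * α = l * p + m := by exact_mod_cast hα
  have hA : (0 : ℝ) ≤ n * A := by positivity
  rw [div_le_iff₀ (by linarith), ← Nat.cast_le (α := ℝ)]
  push_cast
  constructor <;> intro h <;> nlinarith

theorem witness_upper_bound_iff (hn : 0 < n) (hl : 1 ≤ l) (hα : n * α = l * p + m) :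
    (p : ℝ) ≤ ((n : ℝ) * r - m) / ((n : ℝ) * A + l) ↔ A * p + α ≤ r := by
  have hn : (0 : ℝ) < n := by exact_mod_cast hn
  have hl' : (1 : ℝ) ≤ l := by exact_mod_cast hl
  have hα' : (n : ℝ) * α = l * p + m := by exact_mod_cast hα
  rw [le_div_iff₀ (by positivity), ← Nat.cast_le (α := ℝ)]
  push_cast
  constructor <;> intro h <;> nlinarith

theorem isLargePrimeWitness_of_window (hmn : m < n) (hg : Nat.Coprime m n) (hα1 : 1 ≤ α)
    (hα : n * α ≡ m [MOD p]) (hwin : α ≤ r % p ∧ r % p + α < p) :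
    IsLargePrimeWitness m n r p ((n * α - m) / p) (r / p) := by
  set l := (n * α - m) / p
  have hn : 0 < n := Nat.zero_lt_of_lt hmn
  have hnα : n ≤ n * α := Nat.le_mul_of_pos_right n hα1
  have hl : n * α = l * p + m := by
    rw [Nat.div_mul_cancel ((Nat.modEq_iff_dvd' (hmn.le.trans hnα)).mp hα.symm)]
    omega
  have hl1 : 1 ≤ l := Nat.pos_of_ne_zero fun hl0 => by simp [hl0] at hl; omega
  have hln : 2 * l < n := by
    have : n * (2 * α) < n * p := Nat.mul_lt_mul_of_pos_left (by omega) hn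
    exact Nat.lt_of_mul_lt_mul_right (a := p) (by nlinarith)
  have hlcop : Nat.Coprime l n := by
    obtain ⟨u, v, huv⟩ := Nat.isCoprime_iff_coprime.mpr hg
    refine Nat.isCoprime_iff_coprime.mp ⟨-u * p, u * α + v, ?_⟩
    have hl' : (n : ℤ) * α = l * p + m := by exact_mod_cast hl
    linear_combination huv + u * hl'
  have hr := Nat.div_add_mod' r p
  refine ⟨hl1, ?_, hlcop, ⟨α, hl.symm⟩, (witness_lower_bound_iff (by omega) hl).mpr (by omega),
    (witness_upper_bound_iff hn hl1 hl).mpr (by omega)⟩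
  rw [lt_div_iff₀ two_pos]
  exact_mod_cast (by omega : l * 2 < n)

theorem exists_window_of_isLargePrimeWitness (hp : 0 < p)
    (hw : IsLargePrimeWitness m n r p l A) :
    ∃ α, n * α = l * p + m ∧ 1 ≤ α ∧ α ≤ r % p ∧ r % p + α < p := by
  obtain ⟨hl1, hln, -, ⟨α, hα⟩, hlow, hup⟩ := hw
  have hln : l < n := by
    have : (l : ℝ) < n := by linarith [(Nat.cast_nonneg l : (0 : ℝ) ≤ l)]
    exact_mod_cast this
  have hlow := (witness_lower_bound_iff hln hα.symm).mp hlow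
  have hup := (witness_upper_bound_iff (by omega) hl1 hα.symm).mp hup
  have hα1 : 1 ≤ α := Nat.pos_of_ne_zero fun hα0 => by
    simp only [hα0, mul_zero, Nat.add_eq_zero_iff, mul_eq_zero] at hα
    omega
  have hdiv : r / p = A := Nat.div_eq_of_lt_le (by omega) (by rw [add_mul]; omega)
  have hr := Nat.div_add_mod' r p
  rw [hdiv] at hr
  exact ⟨α, hα.symm, hα1, by omega, by omega⟩

end

theorem lt_sq_of_sqrt_lt {x p : ℕ} (h : √(x : ℝ) < p) : x < p ^ 2 := by
  have := (Real.sqrt_lt' ((Real.sqrt_nonneg _).trans_lt h)).mp h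
  exact_mod_cast this

section
variable {m n r p : ℕ}

theorem not_sq_dvd_and_exists_witness_of_dvd_hyperD (hmn : m < n) (hg : Nat.Coprime m n)
    (hp : p.Prime) (hr : n * r < p ^ 2) (hpD : p ∣ hyperD m n r) :
    ¬ p ^ 2 ∣ hyperD m n r ∧ ∃ l A, IsLargePrimeWitness m n r p l A := by
  have := Fact.mk hp
  obtain ⟨h, hhr, hh⟩ :=
    (pow_dvd_hyperD_iff one_ne_zero).mp (by rwa [pow_one] : p ^ 1 ∣ hyperD m n r)
  push_cast at hh
  have hpn : ¬ p ∣ n := fun hpn => by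
    linarith [padicValRat_hyperY_coeff_nonneg_of_dvd hpn hg hmn hhr]
  obtain ⟨α, hα1, hαp, hα⟩ := exists_mul_modEq_of_not_dvd hpn m
  have hval : ∀ h ≤ r, -hyperExcess p α r h ≤ padicValRat p ((hyperY m n r).coeff h) :=
    fun _ => neg_hyperExcess_le_padicValRat hpn hα hα1 hαp hmn hr
  have hexcess : ∀ h ≤ r, hyperExcess p α r h ≤ 1 := fun _ => hyperExcess_le_one hp.pos hαp
  refine ⟨fun hp2 => ?_, _, _, isLargePrimeWitness_of_window hmn hg hα1 hα
    (window_of_hyperExcess_eq_one hp.pos hαp hhr ?_)⟩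
  · obtain ⟨h', hh'r, hh'⟩ := (pow_dvd_hyperD_iff two_ne_zero).mp hp2
    push_cast at hh'
    linarith [hval h' hh'r, hexcess h' hh'r]
  · linarith [hval h hhr, hexcess h hhr]

theorem dvd_hyperD_of_isLargePrimeWitness (hmn : m < n) (hg : Nat.Coprime m n) (hp : p.Prime)
    (hr : n * r + m < p ^ 2) {l A : ℕ} (hw : IsLargePrimeWitness m n r p l A) :
    p ∣ hyperD m n r := by
  have := Fact.mk hp
  obtain ⟨α, hα, hα1, hwin⟩ := exists_window_of_isLargePrimeWitness hp.pos hw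
  have hpn : ¬ p ∣ n := fun hpn => by
    have hpm : p ∣ m :=
      (Nat.dvd_add_right (dvd_mul_left p l)).mp (hα ▸ dvd_mul_of_dvd_left hpn α)
    exact hp.one_lt.ne' (Nat.eq_one_of_dvd_coprimes hg hpm hpn)
  have hαm : n * α ≡ m [MOD p] := by
    rw [hα]
    exact ((Nat.modEq_iff_dvd' (Nat.le_add_left m _)).mpr (by simp)).symm
  have hαr : α ≤ r := hwin.1.trans (Nat.mod_le r p)
  have hval := padicValRat_eq_neg_hyperExcess hpn hαm hα1 (by omega) hmn hr hαr
  rw [hyperExcess_self_eq_one hwin] at hval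
  simpa using (pow_dvd_hyperD_iff one_ne_zero).mpr ⟨α, hαr, by simp [hval]⟩

end

theorem hyperD_large_prime_divisors_general (m n r : ℕ) (hmn : m < n)
    (hg : Nat.gcd m n = 1) :
    (∀ p : ℕ, p.Prime → Real.sqrt ((n : ℝ) * r) < (p : ℝ) → p ∣ hyperD m n r →
      ¬ p ^ 2 ∣ hyperD m n r ∧
      ∃ l A : ℕ, 1 ≤ l ∧ (l : ℝ) < (n : ℝ) / 2 ∧ Nat.gcd l n = 1 ∧
        n ∣ (l * p + m) ∧
        ((n : ℝ) * r + m + n) / ((n : ℝ) * A + n - l) ≤ (p : ℝ) ∧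
        (p : ℝ) ≤ ((n : ℝ) * r - m) / ((n : ℝ) * A + l)) ∧
    (∀ p : ℕ, p.Prime → Real.sqrt ((n : ℝ) * r + m) < (p : ℝ) →
      (∃ l A : ℕ, 1 ≤ l ∧ (l : ℝ) < (n : ℝ) / 2 ∧ Nat.gcd l n = 1 ∧
        n ∣ (l * p + m) ∧
        ((n : ℝ) * r + m + n) / ((n : ℝ) * A + n - l) ≤ (p : ℝ) ∧
        (p : ℝ) ≤ ((n : ℝ) * r - m) / ((n : ℝ) * A + l)) →
      p ∣ hyperD m n r) :=
  ⟨fun _ hp hlt hpD => not_sq_dvd_and_exists_witness_of_dvd_hyperD hmn hg hp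
      (lt_sq_of_sqrt_lt (by exact_mod_cast hlt)) hpD,
    fun _ hp hlt ⟨_, _, hw⟩ => dvd_hyperD_of_isLargePrimeWitness hmn hg hp
      (lt_sq_of_sqrt_lt (by exact_mod_cast hlt)) hw⟩

/-- **Lemma 2(b).** If a prime `p > (nr)^{1/2}` divides `D_{m,n,r}`, then
`p²` does not divide `D_{m,n,r}` and there are `1 ≤ l < n/2` with `gcd(l,n) = 1`,
`l·p ≡ −m (mod n)`, and a non-negative integer `A` with
`(nr + m + n)/(nA + n − l) ≤ p ≤ (nr − m)/(nA + l)`. Moreover, every such prime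
greater than `(nr + m)^{1/2}` divides `D_{m,n,r}`. -/
theorem hyperD_large_prime_divisors (m n r : ℕ) (hm : 0 < m) (hmn : m < n)
    (hg : Nat.gcd m n = 1) (hr : 0 < r) :
    (∀ p : ℕ, p.Prime → Real.sqrt ((n : ℝ) * r) < (p : ℝ) → p ∣ hyperD m n r →
      ¬ p ^ 2 ∣ hyperD m n r ∧
      ∃ l A : ℕ, 1 ≤ l ∧ (l : ℝ) < (n : ℝ) / 2 ∧ Nat.gcd l n = 1 ∧
        n ∣ (l * p + m) ∧
        ((n : ℝ) * r + m + n) / ((n : ℝ) * A + n - l) ≤ (p : ℝ) ∧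
        (p : ℝ) ≤ ((n : ℝ) * r - m) / ((n : ℝ) * A + l)) ∧
    (∀ p : ℕ, p.Prime → Real.sqrt ((n : ℝ) * r + m) < (p : ℝ) →
      (∃ l A : ℕ, 1 ≤ l ∧ (l : ℝ) < (n : ℝ) / 2 ∧ Nat.gcd l n = 1 ∧
        n ∣ (l * p + m) ∧
        ((n : ℝ) * r + m + n) / ((n : ℝ) * A + n - l) ≤ (p : ℝ) ∧
        (p : ℝ) ≤ ((n : ℝ) * r - m) / ((n : ℝ) * A + l)) →
      p ∣ hyperD m n r) :=
  hyperD_large_prime_divisors_general m n r hmn hg
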